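/- Let m ≥ 1, k, and n be natural numbers. Let P : EuclideanSpace ℝ (Fin m) → ℝ be a C^∞ function that is harmonic on ℝ^m ∖ {0} and positively homogeneous of degree k (P(t•x) = t^k·P(x) for all t > 0 and all x). Let h : ℝ × ℝ → ℝ be C^∞ on ℝ × (0,∞) and satisfy ∂₁²h + ∂₂²h = 0 on ℝ × (0,∞). Define F(x₀, x) = h(x₀, ‖x‖)·P(x) on { (x₀,x) : x ≠ 0 }. Then for every x₀ ∈ ℝ and every x ≠ 0, the n-fold iterated Laplacian of F at (x₀, x) equals ( ∏_{j=1}^{n} (2k + m − (2j−1)) ) · D_r(n){h}(x₀, ‖x‖) · P(x), where D_r(n){h} denotes the operator D(n) applied to h in its second argument (the first argument held fixed). -/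

import Mathlib

open Finset
open Set ContDiff

/-- The operator `D(n){f} = ((1/t) d/dt)^n f`:
`D(0){f} = f` and `D(n+1){f}(t) = (d/dt D(n){f})(t) / t`. -/
noncomputable def Dlow : ℕ → (ℝ → ℝ) → (ℝ → ℝ)
  | 0, f => f
  | n + 1, f => fun t => deriv (Dlow n f) t / t

/-- Second directional derivative of `F` in the direction `v` at the point `p`. -/
noncomputable def dirDeriv2 {E : Type*} [NormedAddCommGroup E] [NormedSpace ℝ E]
    (F : E → ℝ) (v : E) (p : E) : ℝ :=
  fderiv ℝ (fun q => fderiv ℝ F q v) p v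

/-- Laplacian on `EuclideanSpace ℝ (Fin m)`. -/
noncomputable def lapE (m : ℕ) (P : EuclideanSpace ℝ (Fin m) → ℝ)
    (x : EuclideanSpace ℝ (Fin m)) : ℝ :=
  ∑ i : Fin m, dirDeriv2 P (EuclideanSpace.single i 1) x

/-- Laplacian on the inner product space `ℝ × EuclideanSpace ℝ (Fin m)`, as an
operator on functions (so that it can be iterated). -/
noncomputable def lapProd (m : ℕ) (F : ℝ × EuclideanSpace ℝ (Fin m) → ℝ) :
    ℝ × EuclideanSpace ℝ (Fin m) → ℝ :=
  fun p => dirDeriv2 F (1, 0) p + ∑ i : Fin m, dirDeriv2 F (0, EuclideanSpace.single i 1) p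

noncomputable def DD (v : ℝ × ℝ) (g : ℝ × ℝ → ℝ) : ℝ × ℝ → ℝ := fun q => fderiv ℝ g q v

def U01 : Set (ℝ × ℝ) := Set.univ ×ˢ Set.Ioi (0:ℝ)

lemma isOpen_U01 : IsOpen U01 := isOpen_univ.prod isOpen_Ioi
lemma mem_U01 {a b : ℝ} (hb : 0 < b) : (a, b) ∈ U01 := ⟨trivial, hb⟩

lemma hasDerivAt_line {E : Type*} [NormedAddCommGroup E] [NormedSpace ℝ E]
    (F : E → ℝ) (q v : E) (t₀ : ℝ) (hF : DifferentiableAt ℝ F (q + t₀ • v)) :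
    HasDerivAt (fun t : ℝ => F (q + t • v)) (fderiv ℝ F (q + t₀ • v) v) t₀ := by
  have hc : HasDerivAt (fun t : ℝ => q + t • v) v t₀ := by
    simpa using ((hasDerivAt_id t₀).smul_const v).const_add q
  exact hF.hasFDerivAt.comp_hasDerivAt t₀ hc

lemma slice1 {g : ℝ × ℝ → ℝ} {a b : ℝ} (hg : DifferentiableAt ℝ g (a, b)) :
    HasDerivAt (fun s => g (s, b)) (DD (1,0) g (a,b)) a := by
  have := hasDerivAt_line g (0, b) (1, 0) a (by simpa using hg)
  simp only [Prod.smul_mk, Prod.mk_add_mk, smul_eq_mul, mul_one, mul_zero, add_zero, zero_add] at this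
  exact this

lemma slice2 {g : ℝ × ℝ → ℝ} {a b : ℝ} (hg : DifferentiableAt ℝ g (a, b)) :
    HasDerivAt (fun s => g (a, s)) (DD (0,1) g (a,b)) b := by
  have := hasDerivAt_line g (a, 0) (0, 1) b (by simpa using hg)
  simp only [Prod.smul_mk, Prod.mk_add_mk, smul_eq_mul, mul_one, mul_zero, add_zero, zero_add] at this
  exact this

lemma DD_contDiffOn {g : ℝ × ℝ → ℝ} (hg : ContDiffOn ℝ ∞ g U01) (v : ℝ × ℝ) :
    ContDiffOn ℝ ∞ (DD v g) U01 := by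
  have h1 : ContDiffOn ℝ ∞ (fderiv ℝ g) U01 :=
    hg.fderiv_of_isOpen isOpen_U01 (by norm_num)
  exact h1.clm_apply contDiffOn_const

lemma DD_congr {g₁ g₂ : ℝ × ℝ → ℝ} (hgg : Set.EqOn g₁ g₂ U01) {q : ℝ × ℝ} (hq : q ∈ U01)
    (v : ℝ × ℝ) : DD v g₁ q = DD v g₂ q := by
  have : fderiv ℝ g₁ q = fderiv ℝ g₂ q :=
    Filter.EventuallyEq.fderiv_eq (hgg.eventuallyEq_of_mem (isOpen_U01.mem_nhds hq))
  simp [DD, this]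

lemma DD_swap {g : ℝ × ℝ → ℝ} (hg : ContDiffOn ℝ ∞ g U01) {q : ℝ × ℝ} (hq : q ∈ U01) :
    DD (1,0) (DD (0,1) g) q = DD (0,1) (DD (1,0) g) q := by
  have hat : ContDiffAt ℝ ∞ g q := hg.contDiffAt (isOpen_U01.mem_nhds hq)
  have hsymm : IsSymmSndFDerivAt ℝ g q := hat.isSymmSndFDerivAt (by rw [minSmoothness_of_isRCLikeNormedField]; norm_cast)
  have hd : DifferentiableAt ℝ (fderiv ℝ g) q := by
    have := (hg.fderiv_of_isOpen isOpen_U01 (m := ∞) (by norm_num)).contDiffAt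
      (isOpen_U01.mem_nhds hq)
    exact this.differentiableAt (by norm_num)
  have key : ∀ v w : ℝ × ℝ,
      DD v (DD w g) q = fderiv ℝ (fderiv ℝ g) q v w := by
    intro v w
    have e : DD w g = (ContinuousLinearMap.apply ℝ ℝ w) ∘ (fderiv ℝ g) := rfl
    simp only [DD, e]
    rw [fderiv_comp q (ContinuousLinearMap.apply ℝ ℝ w).differentiableAt hd]
    simp
  rw [key, key]
  exact hsymm (1,0) (0,1)

section Euc
variable {m : ℕ}
local notation "E" => EuclideanSpace ℝ (Fin m)

lemma sum_sq_eq_normsq (x : E) : ∑ i, (x i)^2 = ‖x‖^2 := by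
  have := @real_inner_self_eq_norm_sq _ _ _ x
  rw [← this, PiLp.inner_apply]
  simp [sq, RCLike.inner_apply]

lemma x_eq_sum (x : E) : x = ∑ i, x i • EuclideanSpace.single i (1:ℝ) := by
  ext j
  simp [WithLp.ofLp_sum, Pi.single_apply]

lemma norm_line_curve (x : E) (i : Fin m) (hx : x ≠ 0) :
    HasDerivAt (fun t : ℝ => ‖x + t • EuclideanSpace.single i (1:ℝ)‖) (x i / ‖x‖) 0 := by
  have hfun : (fun t : ℝ => ‖x + t • EuclideanSpace.single i (1:ℝ)‖)
      = fun t : ℝ => Real.sqrt (‖x‖^2 + 2 * (x i) * t + t^2) := by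
    funext t
    rw [← Real.sqrt_sq (norm_nonneg _)]
    congr 1
    rw [@norm_add_sq_real _ _ _ x]
    have h1 : inner ℝ x (t • EuclideanSpace.single i (1:ℝ)) = t * x i := by
      rw [real_inner_smul_right]
      simp [PiLp.inner_apply, EuclideanSpace.single_apply, RCLike.inner_apply]
    have h2 : ‖t • EuclideanSpace.single i (1:ℝ)‖ = |t| := by
      rw [norm_smul, EuclideanSpace.norm_single]; simp
    rw [h1, h2]
    rw [sq_abs]; ring
  rw [hfun]
  have hq : HasDerivAt (fun t : ℝ => ‖x‖^2 + 2 * (x i) * t + t^2) (2 * x i) 0 := by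
    have := (((hasDerivAt_id (0:ℝ)).const_mul (2 * x i)).const_add (‖x‖^2)).add
      ((hasDerivAt_pow 2 (0:ℝ)))
    simpa [Pi.add_def] using this
  have hne : (‖x‖^2 + 2 * (x i) * 0 + 0^2) ≠ 0 := by
    simpa using pow_ne_zero 2 (norm_ne_zero_iff.2 hx)
  have := hq.sqrt hne
  convert this using 1
  have : Real.sqrt (‖x‖^2 + 2 * x i * 0 + 0^2) = ‖x‖ := by
    simp [Real.sqrt_sq (norm_nonneg x)]
  rw [this]
  ring

lemma euler {k : ℕ} {P : E → ℝ} (hP : Differentiable ℝ P)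
    (hPhom : ∀ t : ℝ, 0 < t → ∀ x : E, P (t • x) = t ^ k * P x)
    (x : E) : fderiv ℝ P x x = k * P x := by
  have h1 : HasDerivAt (fun t : ℝ => P (t • x)) (fderiv ℝ P x x) 1 := by
    have := hasDerivAt_line P 0 x 1 (by simpa using hP x)
    simpa using this
  have h2 : HasDerivAt (fun t : ℝ => t ^ k * P x) ((k : ℝ) * P x) 1 := by
    have := (hasDerivAt_pow k (1:ℝ)).mul_const (P x)
    simpa using this
  have heq : (fun t : ℝ => P (t • x)) =ᶠ[nhds 1] (fun t : ℝ => t ^ k * P x) := by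
    filter_upwards [isOpen_Ioi.mem_nhds (by norm_num : (1:ℝ) ∈ Set.Ioi (0:ℝ))] with t ht
    exact hPhom t ht x
  exact (h1.congr_of_eventuallyEq heq.symm).unique h2

lemma fderiv_apply_x {k : ℕ} {P : E → ℝ} (hP : Differentiable ℝ P)
    (hPhom : ∀ t : ℝ, 0 < t → ∀ x : E, P (t • x) = t ^ k * P x)
    (x : E) : ∑ i, x i * fderiv ℝ P x (EuclideanSpace.single i (1:ℝ)) = k * P x := by
  have : ∑ i, x i * fderiv ℝ P x (EuclideanSpace.single i (1:ℝ))
      = fderiv ℝ P x (∑ i, x i • EuclideanSpace.single i (1:ℝ)) := by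
    rw [map_sum]; simp
  rw [this, ← x_eq_sum x, euler hP hPhom x]

end Euc

section Gcomp
variable {m : ℕ}
local notation "E" => EuclideanSpace ℝ (Fin m)
variable {P : EuclideanSpace ℝ (Fin m) → ℝ} {g : ℝ × ℝ → ℝ}

lemma Phi_contDiffAt {a : ℝ} (x : E) (hx : x ≠ 0) :
    ContDiffAt ℝ ∞ (fun p : ℝ × E => (p.1, ‖p.2‖)) (a, x) := by
  exact contDiffAt_fst.prodMk ((contDiffAt_norm ℝ hx).comp _ contDiffAt_snd)

lemma G_contDiffAt (hP : ContDiff ℝ ∞ P) (hg : ContDiffOn ℝ ∞ g U01)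
    (a : ℝ) (x : E) (hx : x ≠ 0) :
    ContDiffAt ℝ ∞ (fun p : ℝ × E => g (p.1, ‖p.2‖) * P p.2) (a, x) := by
  have h1 : ContDiffAt ℝ ∞ g ((a : ℝ), ‖x‖) :=
    hg.contDiffAt (isOpen_U01.mem_nhds (mem_U01 (norm_pos_iff.2 hx)))
  exact ((h1.comp (a, x) (Phi_contDiffAt x hx)).mul (hP.contDiffAt.comp (a, x) contDiffAt_snd))

lemma fd1 (hP : ContDiff ℝ ∞ P) (hg : ContDiffOn ℝ ∞ g U01)
    (a : ℝ) (x : E) (hx : x ≠ 0) :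
    fderiv ℝ (fun p : ℝ × E => g (p.1, ‖p.2‖) * P p.2) (a, x) ((1 : ℝ), (0 : E))
      = DD (1,0) g (a, ‖x‖) * P x := by
  have hGd : DifferentiableAt ℝ (fun p : ℝ × E => g (p.1, ‖p.2‖) * P p.2) (a, x) :=
    (G_contDiffAt hP hg a x hx).differentiableAt (by norm_cast)
  have h1 := hasDerivAt_line (fun p : ℝ × E => g (p.1, ‖p.2‖) * P p.2)
    (a, x) ((1 : ℝ), (0 : E)) 0 (by simpa using hGd)
  simp only [Prod.smul_mk, Prod.mk_add_mk, smul_eq_mul, mul_one, smul_zero, add_zero] at h1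
  -- h1 : HasDerivAt (fun t => g (a + t, ‖x‖) * P x) (fderiv ... (1,0)) 0
  have hgd : DifferentiableAt ℝ g (a, ‖x‖) :=
    (hg.contDiffAt (isOpen_U01.mem_nhds (mem_U01 (norm_pos_iff.2 hx)))).differentiableAt
      (by norm_cast)
  have h2 : HasDerivAt (fun t : ℝ => g (a + t, ‖x‖)) (DD (1,0) g (a, ‖x‖)) 0 := by
    have := hasDerivAt_line g (a, ‖x‖) (1, 0) 0 (by simpa using hgd)
    simp only [Prod.smul_mk, Prod.mk_add_mk, smul_eq_mul, mul_one, mul_zero, add_zero] at this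
    simpa [DD] using this
  exact h1.unique (h2.mul_const (P x))

lemma fd2 (hP : ContDiff ℝ ∞ P) (hg : ContDiffOn ℝ ∞ g U01)
    (a : ℝ) (x : E) (hx : x ≠ 0) (i : Fin m) :
    fderiv ℝ (fun p : ℝ × E => g (p.1, ‖p.2‖) * P p.2) (a, x)
        ((0 : ℝ), EuclideanSpace.single i (1:ℝ))
      = DD (0,1) g (a, ‖x‖) * (x i / ‖x‖) * P x
        + g (a, ‖x‖) * fderiv ℝ P x (EuclideanSpace.single i (1:ℝ)) := by
  set e := EuclideanSpace.single i (1:ℝ) with he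
  have hGd : DifferentiableAt ℝ (fun p : ℝ × E => g (p.1, ‖p.2‖) * P p.2) (a, x) :=
    (G_contDiffAt hP hg a x hx).differentiableAt (by norm_cast)
  have h1 := hasDerivAt_line (fun p : ℝ × E => g (p.1, ‖p.2‖) * P p.2)
    (a, x) ((0 : ℝ), e) 0 (by simpa using hGd)
  simp only [Prod.smul_mk, Prod.mk_add_mk, smul_eq_mul, mul_zero, add_zero, smul_zero,
    zero_smul, zero_add] at h1
  have hgd : DifferentiableAt ℝ g (a, ‖x‖) :=
    (hg.contDiffAt (isOpen_U01.mem_nhds (mem_U01 (norm_pos_iff.2 hx)))).differentiableAt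
      (by norm_cast)
  have nc : HasDerivAt (fun t : ℝ => ‖x + t • e‖) (x i / ‖x‖) 0 := norm_line_curve x i hx
  have hφ0 : ‖x + (0:ℝ) • e‖ = ‖x‖ := by simp
  have hgs : HasDerivAt (fun s : ℝ => g (a, s)) (DD (0,1) g (a, ‖x‖)) (‖x + (0:ℝ) • e‖) := by
    rw [hφ0]; exact slice2 hgd
  have hcomp : HasDerivAt (fun t : ℝ => g (a, ‖x + t • e‖))
      (DD (0,1) g (a, ‖x‖) * (x i / ‖x‖)) 0 := by
    simpa [Function.comp_def] using hgs.comp 0 nc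
  have hPc : HasDerivAt (fun t : ℝ => P (x + t • e)) (fderiv ℝ P x e) 0 := by
    have := hasDerivAt_line P x e 0 (by simpa using hP.differentiable (by norm_cast) x)
    simpa using this
  have hcomb := hcomp.mul hPc
  simp only [hφ0] at hcomb h1
  have := h1.unique hcomb
  rw [this]
  simp

lemma fd3 (hP : ContDiff ℝ ∞ P) (hg : ContDiffOn ℝ ∞ g U01)
    (a : ℝ) (x : E) (hx : x ≠ 0) (i : Fin m) :
    fderiv ℝ (fun p : ℝ × E => DD (0,1) g (p.1, ‖p.2‖) * (p.2 i / ‖p.2‖) * P p.2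
        + g (p.1, ‖p.2‖) * fderiv ℝ P p.2 (EuclideanSpace.single i (1:ℝ))) (a, x)
        ((0 : ℝ), EuclideanSpace.single i (1:ℝ))
      = DD (0,1) (DD (0,1) g) (a, ‖x‖) * ((x i)^2 / ‖x‖^2) * P x
        + DD (0,1) g (a, ‖x‖) * (1/‖x‖ - (x i)^2/‖x‖^3) * P x
        + 2 * (DD (0,1) g (a, ‖x‖) * (x i / ‖x‖) * fderiv ℝ P x (EuclideanSpace.single i (1:ℝ)))
        + g (a, ‖x‖) * dirDeriv2 P (EuclideanSpace.single i (1:ℝ)) x := by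
  set e := EuclideanSpace.single i (1:ℝ) with he
  have hP' : ContDiff ℝ ∞ P := hP.of_le le_rfl
  have hr : (0:ℝ) < ‖x‖ := norm_pos_iff.2 hx
  have hmem := isOpen_U01.mem_nhds (mem_U01 (a := a) hr)
  have hgd : DifferentiableAt ℝ g (a, ‖x‖) :=
    (hg.contDiffAt hmem).differentiableAt (by norm_cast)
  have hg2 : ContDiffOn ℝ ∞ (DD (0,1) g) U01 := DD_contDiffOn hg _
  have hg2d : DifferentiableAt ℝ (DD (0,1) g) (a, ‖x‖) :=
    (hg2.contDiffAt hmem).differentiableAt (by norm_cast)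
  have hPf : ContDiff ℝ ∞ (fun y : E => fderiv ℝ P y e) :=
    (hP.fderiv_right (m := ∞) (by simp)).clm_apply contDiff_const
  -- differentiability of the whole function
  have hproj : ContDiff ℝ ∞ (fun q : ℝ × E => q.2 i) :=
    (EuclideanSpace.proj i : EuclideanSpace ℝ (Fin m) →L[ℝ] ℝ).contDiff.comp contDiff_snd
  have hnormAt : ContDiffAt ℝ ∞ (fun q : ℝ × E => ‖q.2‖) (a, x) :=
    (contDiffAt_norm ℝ hx).comp _ contDiffAt_snd
  have hPhi : ContDiffAt ℝ ∞ (fun p : ℝ × E => (p.1, ‖p.2‖)) (a, x) := Phi_contDiffAt x hx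
  have hdiff : DifferentiableAt ℝ (fun p : ℝ × E =>
      DD (0,1) g (p.1, ‖p.2‖) * (p.2 i / ‖p.2‖) * P p.2
        + g (p.1, ‖p.2‖) * fderiv ℝ P p.2 e) (a, x) := by
    refine DifferentiableAt.add ?_ ?_
    · refine (DifferentiableAt.mul ?_ ?_).mul ?_
      · exact (((hg2.contDiffAt hmem).comp (a, x) hPhi)).differentiableAt (by norm_cast)
      · exact ((hproj.contDiffAt.div hnormAt (norm_ne_zero_iff.2 hx))).differentiableAt
          (by norm_cast)
      · exact ((hP'.contDiffAt.comp (a, x) contDiffAt_snd)).differentiableAt (by norm_cast)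
    · refine DifferentiableAt.mul ?_ ?_
      · exact (((hg.contDiffAt hmem).comp (a, x) hPhi)).differentiableAt (by norm_cast)
      · exact ((hPf.contDiffAt.comp (a, x) contDiffAt_snd)).differentiableAt (by norm_cast)
  have h1 := hasDerivAt_line (fun p : ℝ × E =>
      DD (0,1) g (p.1, ‖p.2‖) * (p.2 i / ‖p.2‖) * P p.2
        + g (p.1, ‖p.2‖) * fderiv ℝ P p.2 e) (a, x) ((0 : ℝ), e) 0 (by simpa using hdiff)
  simp only [Prod.smul_mk, Prod.mk_add_mk, smul_eq_mul, mul_zero, add_zero, smul_zero,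
    zero_smul, zero_add] at h1
  -- component curves
  have nc : HasDerivAt (fun t : ℝ => ‖x + t • e‖) (x i / ‖x‖) 0 := norm_line_curve x i hx
  have hφ0 : ‖x + (0:ℝ) • e‖ = ‖x‖ := by simp
  have happly : ∀ t : ℝ, (x + t • e) i = x i + t := by
    intro t
    have : (x + t • e) i = x i + t * (e i) := rfl
    rw [this, he]
    simp [EuclideanSpace.single_apply]
  have hA : HasDerivAt (fun t : ℝ => DD (0,1) g (a, ‖x + t • e‖))
      (DD (0,1) (DD (0,1) g) (a, ‖x‖) * (x i / ‖x‖)) 0 := by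
    have hs : HasDerivAt (fun s : ℝ => DD (0,1) g (a, s))
        (DD (0,1) (DD (0,1) g) (a, ‖x‖)) (‖x + (0:ℝ) • e‖) := by
      rw [hφ0]; exact slice2 hg2d
    simpa [Function.comp_def] using hs.comp 0 nc
  have hB : HasDerivAt (fun t : ℝ => (x + t • e) i / ‖x + t • e‖)
      ((1 * ‖x‖ - x i * (x i / ‖x‖)) / ‖x‖^2) 0 := by
    have hnum : HasDerivAt (fun t : ℝ => (x + t • e) i) 1 0 := by
      have : (fun t : ℝ => (x + t • e) i) = fun t => x i + t := by
        funext t; exact happly t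
      rw [this]
      simpa using (hasDerivAt_id (0:ℝ)).const_add (x i)
    have := hnum.div nc (by rw [hφ0]; exact norm_ne_zero_iff.2 hx)
    simpa [hφ0, happly, Pi.div_def] using this
  have hC : HasDerivAt (fun t : ℝ => P (x + t • e)) (fderiv ℝ P x e) 0 := by
    have := hasDerivAt_line P x e 0 (by simpa using hP'.differentiable (by norm_cast) x)
    simpa using this
  have hD : HasDerivAt (fun t : ℝ => g (a, ‖x + t • e‖))
      (DD (0,1) g (a, ‖x‖) * (x i / ‖x‖)) 0 := by
    have hs : HasDerivAt (fun s : ℝ => g (a, s)) (DD (0,1) g (a, ‖x‖)) (‖x + (0:ℝ) • e‖) := by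
      rw [hφ0]; exact slice2 hgd
    simpa [Function.comp_def] using hs.comp 0 nc
  have hE : HasDerivAt (fun t : ℝ => fderiv ℝ P (x + t • e) e) (dirDeriv2 P e x) 0 := by
    have := hasDerivAt_line (fun y : E => fderiv ℝ P y e) x e 0
      (by simpa using hPf.differentiable (by norm_cast) x)
    simpa [dirDeriv2] using this
  have hcomb := ((hA.mul hB).mul hC).add (hD.mul hE)
  simp only [hφ0, happly, Pi.mul_apply, Pi.add_apply, zero_smul, add_zero] at hcomb h1
  rw [h1.unique hcomb]
  have hr' : ‖x‖ ≠ 0 := ne_of_gt hr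
  field_simp
  ring

def Om (m : ℕ) : Set (ℝ × EuclideanSpace ℝ (Fin m)) := {p | p.2 ≠ 0}

lemma isOpen_Om : IsOpen (Om m) :=
  isOpen_compl_singleton.preimage continuous_snd

lemma step {k : ℕ} (hP : ContDiff ℝ ∞ P)
    (hPharm : ∀ x : E, x ≠ 0 → lapE m P x = 0)
    (hPhom : ∀ t : ℝ, 0 < t → ∀ x : E, P (t • x) = t ^ k * P x)
    (hg : ContDiffOn ℝ ∞ g U01) (a : ℝ) (x : E) (hx : x ≠ 0) :
    lapProd m (fun p => g (p.1, ‖p.2‖) * P p.2) (a, x)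
      = (DD (1,0) (DD (1,0) g) (a, ‖x‖) + DD (0,1) (DD (0,1) g) (a, ‖x‖)
          + ((2 * k + m - 1)/‖x‖) * DD (0,1) g (a, ‖x‖)) * P x := by
  have hP' : ContDiff ℝ ∞ P := hP.of_le le_rfl
  have hr : (0:ℝ) < ‖x‖ := norm_pos_iff.2 hx
  have hr' : ‖x‖ ≠ 0 := ne_of_gt hr
  have hmemOm : ((a, x) : ℝ × E) ∈ Om m := hx
  have hnhds := isOpen_Om.mem_nhds hmemOm
  -- first term
  have T0 : dirDeriv2 (fun p : ℝ × E => g (p.1, ‖p.2‖) * P p.2) (1, 0) (a, x)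
      = DD (1,0) (DD (1,0) g) (a, ‖x‖) * P x := by
    have heq : Set.EqOn (fun q : ℝ × E => fderiv ℝ (fun p : ℝ × E => g (p.1, ‖p.2‖) * P p.2) q (1, 0))
        (fun q : ℝ × E => DD (1,0) g (q.1, ‖q.2‖) * P q.2) (Om m) := by
      rintro ⟨b, y⟩ hy
      exact fd1 hP' hg b y hy
    have := Filter.EventuallyEq.fderiv_eq (𝕜 := ℝ) (heq.eventuallyEq_of_mem hnhds)
    rw [dirDeriv2, this]
    exact fd1 hP' (DD_contDiffOn hg _) a x hx
  -- i-th terms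
  have Ti : ∀ i : Fin m, dirDeriv2 (fun p : ℝ × E => g (p.1, ‖p.2‖) * P p.2)
      (0, EuclideanSpace.single i 1) (a, x)
      = DD (0,1) (DD (0,1) g) (a, ‖x‖) * ((x i)^2 / ‖x‖^2) * P x
        + DD (0,1) g (a, ‖x‖) * (1/‖x‖ - (x i)^2/‖x‖^3) * P x
        + 2 * (DD (0,1) g (a, ‖x‖) * (x i / ‖x‖) * fderiv ℝ P x (EuclideanSpace.single i (1:ℝ)))
        + g (a, ‖x‖) * dirDeriv2 P (EuclideanSpace.single i (1:ℝ)) x := by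
    intro i
    have heq : Set.EqOn (fun q : ℝ × E => fderiv ℝ (fun p : ℝ × E => g (p.1, ‖p.2‖) * P p.2) q
        (0, EuclideanSpace.single i 1))
        (fun q : ℝ × E => DD (0,1) g (q.1, ‖q.2‖) * (q.2 i / ‖q.2‖) * P q.2
          + g (q.1, ‖q.2‖) * fderiv ℝ P q.2 (EuclideanSpace.single i (1:ℝ))) (Om m) := by
      rintro ⟨b, y⟩ hy
      exact fd2 hP' hg b y hy i
    have := Filter.EventuallyEq.fderiv_eq (𝕜 := ℝ) (heq.eventuallyEq_of_mem hnhds)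
    rw [dirDeriv2, this]
    exact fd3 hP hg a x hx i
  rw [lapProd]
  rw [T0, Finset.sum_congr rfl (fun i _ => Ti i)]
  set A := DD (1,0) (DD (1,0) g) (a, ‖x‖)
  set B := DD (0,1) (DD (0,1) g) (a, ‖x‖)
  set C := DD (0,1) g (a, ‖x‖)
  set G0 := g (a, ‖x‖)
  have S : ∑ i : Fin m, (B * ((x i)^2 / ‖x‖^2) * P x
        + C * (1/‖x‖ - (x i)^2/‖x‖^3) * P x
        + 2 * (C * (x i / ‖x‖) * fderiv ℝ P x (EuclideanSpace.single i (1:ℝ)))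
        + G0 * dirDeriv2 P (EuclideanSpace.single i (1:ℝ)) x)
      = B * P x + C * ((m - 1)/‖x‖) * P x + (2 * C / ‖x‖) * (k * P x) + G0 * lapE m P x := by
    rw [Finset.sum_add_distrib, Finset.sum_add_distrib, Finset.sum_add_distrib]
    congr 1
    · congr 1
      · congr 1
        · have : ∀ i : Fin m, B * ((x i)^2 / ‖x‖^2) * P x = (B * P x / ‖x‖^2) * (x i)^2 :=
            fun i => by ring
          rw [Finset.sum_congr rfl (fun i _ => this i), ← Finset.mul_sum, sum_sq_eq_normsq]
          field_simp
        · have : ∀ i : Fin m, C * (1/‖x‖ - (x i)^2/‖x‖^3) * P x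
              = C * P x / ‖x‖ - (C * P x / ‖x‖^3) * (x i)^2 := fun i => by ring
          rw [Finset.sum_congr rfl (fun i _ => this i), Finset.sum_sub_distrib,
            ← Finset.mul_sum, sum_sq_eq_normsq, Finset.sum_const, Finset.card_univ,
            Fintype.card_fin]
          simp only [nsmul_eq_mul]
          field_simp
      · have : ∀ i : Fin m, 2 * (C * (x i / ‖x‖) * fderiv ℝ P x (EuclideanSpace.single i (1:ℝ)))
            = (2 * C / ‖x‖) * (x i * fderiv ℝ P x (EuclideanSpace.single i (1:ℝ))) :=
          fun i => by ring
        rw [Finset.sum_congr rfl (fun i _ => this i), ← Finset.mul_sum,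
          fderiv_apply_x (hP'.differentiable (by norm_cast)) hPhom x]
    · rw [← Finset.mul_sum, lapE]
  rw [S, hPharm x hx]
  field_simp
  ring

end Gcomp

noncomputable def gs (h : ℝ × ℝ → ℝ) : ℕ → ℝ × ℝ → ℝ
  | 0 => h
  | n + 1 => fun q => DD (0,1) (gs h n) q / q.2

lemma U01_snd_ne {q : ℝ × ℝ} (hq : q ∈ U01) : q.2 ≠ 0 := ne_of_gt hq.2

lemma gs_smooth {h : ℝ × ℝ → ℝ} (hh : ContDiffOn ℝ ∞ h U01) :
    ∀ n, ContDiffOn ℝ ∞ (gs h n) U01 := by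
  intro n
  induction n with
  | zero => exact hh
  | succ n ih =>
    exact (DD_contDiffOn ih _).div (contDiff_snd.contDiffOn) (fun q hq => U01_snd_ne hq)

lemma DD1_eq {g : ℝ × ℝ → ℝ} {a b c : ℝ} (hgd : DifferentiableAt ℝ g (a, b))
    (hder : HasDerivAt (fun s => g (s, b)) c a) : DD (1,0) g (a, b) = c :=
  (slice1 hgd).unique hder

lemma DD2_eq {g : ℝ × ℝ → ℝ} {a b c : ℝ} (hgd : DifferentiableAt ℝ g (a, b))
    (hder : HasDerivAt (fun s => g (a, s)) c b) : DD (0,1) g (a, b) = c :=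
  (slice2 hgd).unique hder

lemma gs_harm {h : ℝ × ℝ → ℝ} (hh : ContDiffOn ℝ ∞ h U01)
    (hharm0 : ∀ a b : ℝ, 0 < b →
      DD (1,0) (DD (1,0) h) (a, b) + DD (0,1) (DD (0,1) h) (a, b) = 0) :
    ∀ n, ∀ a b : ℝ, 0 < b →
      DD (1,0) (DD (1,0) (gs h n)) (a, b) + DD (0,1) (DD (0,1) (gs h n)) (a, b)
        + (2 * n / b) * DD (0,1) (gs h n) (a, b) = 0 := by
  intro n
  induction n with
  | zero =>
    intro a b hb
    simpa [gs] using hharm0 a b hb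
  | succ n ih =>
    intro a b hb
    have hb' : b ≠ 0 := ne_of_gt hb
    set g := gs h n with hgdef
    have hgsm : ContDiffOn ℝ ∞ g U01 := gs_smooth hh n
    set u := DD (0,1) g with hudef
    have husm : ContDiffOn ℝ ∞ u U01 := DD_contDiffOn hgsm _
    have hg' : gs h (n+1) = fun q => u q / q.2 := rfl
    have diffAt : ∀ (v : ℝ × ℝ → ℝ), ContDiffOn ℝ ∞ v U01 → ∀ s r : ℝ, 0 < r →
        DifferentiableAt ℝ v (s, r) := by
      intro v hv s r hrpos
      exact (hv.contDiffAt (isOpen_U01.mem_nhds (mem_U01 hrpos))).differentiableAt (by norm_cast)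
    -- F1 : first partial of g'
    have F1 : ∀ s r : ℝ, 0 < r → DD (1,0) (gs h (n+1)) (s, r) = DD (1,0) u (s, r) / r := by
      intro s r hrpos
      refine DD1_eq (diffAt _ (gs_smooth hh (n+1)) s r hrpos) ?_
      rw [hg']
      exact (slice1 (diffAt u husm s r hrpos)).div_const r
    -- F2 : second "11" derivative of g'
    have F2 : DD (1,0) (DD (1,0) (gs h (n+1))) (a, b) = DD (1,0) (DD (1,0) u) (a, b) / b := by
      refine DD1_eq (diffAt _ (DD_contDiffOn (gs_smooth hh (n+1)) _) a b hb) ?_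
      have : (fun s => DD (1,0) (gs h (n+1)) (s, b)) = fun s => DD (1,0) u (s, b) / b := by
        funext s; exact F1 s b hb
      rw [this]
      exact (slice1 (diffAt _ (DD_contDiffOn husm _) a b hb)).div_const b
    -- F3 : swap
    have F3 : DD (1,0) (DD (1,0) u) (a, b) = DD (0,1) (DD (1,0) (DD (1,0) g)) (a, b) := by
      have e1 : Set.EqOn (DD (1,0) u) (DD (0,1) (DD (1,0) g)) U01 := by
        intro q hq
        exact DD_swap hgsm hq
      have := DD_congr e1 (mem_U01 (a := a) hb) (1,0)
      rw [this]
      exact DD_swap (DD_contDiffOn hgsm _) (mem_U01 hb)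
    -- F4 : second partial of g'
    have F4 : ∀ s : ℝ, 0 < s →
        DD (0,1) (gs h (n+1)) (a, s) = (DD (0,1) u (a, s) * s - u (a, s) * 1) / s ^ 2 := by
      intro s hs
      refine DD2_eq (diffAt _ (gs_smooth hh (n+1)) a s hs) ?_
      rw [hg']
      exact (slice2 (diffAt u husm a s hs)).div (hasDerivAt_id s) (ne_of_gt hs)
    -- F5 : second "22" derivative of g'
    have F5 : DD (0,1) (DD (0,1) (gs h (n+1))) (a, b)
        = ((DD (0,1) (DD (0,1) u) (a, b) * b + DD (0,1) u (a, b) * 1 - DD (0,1) u (a, b)) * b ^ 2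
            - (DD (0,1) u (a, b) * b - u (a, b) * 1) * (↑2 * b ^ 1)) / (b ^ 2) ^ 2 := by
      refine DD2_eq (diffAt _ (DD_contDiffOn (gs_smooth hh (n+1)) _) a b hb) ?_
      have hev : (fun s => (DD (0,1) u (a, s) * s - u (a, s) * 1) / s ^ 2)
          =ᶠ[nhds b] (fun s => DD (0,1) (gs h (n+1)) (a, s)) := by
        filter_upwards [isOpen_Ioi.mem_nhds hb] with s hs
        exact (F4 s hs).symm
      have hnum : HasDerivAt (fun s => DD (0,1) u (a, s) * s - u (a, s) * 1)
          (DD (0,1) (DD (0,1) u) (a, b) * b + DD (0,1) u (a, b) * 1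
            - DD (0,1) u (a, b)) b := by
        have h1 := (slice2 (diffAt (DD (0,1) u) (DD_contDiffOn husm (0,1)) a b hb)).mul (hasDerivAt_id b)
        have h2 := slice2 (diffAt u husm a b hb)
        simpa [Pi.sub_def, Pi.mul_def] using h1.sub (h2.mul_const 1)
      have hden : HasDerivAt (fun s : ℝ => s ^ 2) ((2:ℕ) * b ^ 1) b := hasDerivAt_pow 2 b
      have := hnum.div hden (pow_ne_zero 2 hb')
      exact this.congr_of_eventuallyEq hev.symm
    -- F6 : derivative of the harmonic identity for g
    have F6 : DD (0,1) (DD (1,0) (DD (1,0) g)) (a, b) + DD (0,1) (DD (0,1) u) (a, b)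
        + (((0 * b - 2 * n * 1) / b ^ 2) * u (a, b) + (2 * n / b) * DD (0,1) u (a, b)) = 0 := by
      have h1 := slice2 (diffAt (DD (1,0) (DD (1,0) g)) (DD_contDiffOn (DD_contDiffOn hgsm (1,0)) (1,0)) a b hb)
      have h2 := slice2 (diffAt (DD (0,1) u) (DD_contDiffOn husm (0,1)) a b hb)
      have h3 : HasDerivAt (fun s : ℝ => 2 * n / s) ((0 * b - 2 * n * 1) / b ^ 2) b :=
        (hasDerivAt_const b (2 * (n:ℝ))).div (hasDerivAt_id b) hb'
      have h4 := h3.mul (slice2 (diffAt u husm a b hb))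
      have hsum := (h1.add h2).add h4
      have hzero : (fun s => DD (1,0) (DD (1,0) g) (a, s) + DD (0,1) (DD (0,1) g) (a, s)
          + (2 * n / s) * DD (0,1) g (a, s)) =ᶠ[nhds b] (fun _ => (0:ℝ)) := by
        filter_upwards [isOpen_Ioi.mem_nhds hb] with s hs
        exact ih a s hs
      have hz : HasDerivAt (fun _ : ℝ => (0:ℝ)) (DD (0,1) (DD (1,0) (DD (1,0) g)) (a, b)
          + DD (0,1) (DD (0,1) u) (a, b)
          + (((0 * b - 2 * n * 1) / b ^ 2) * u (a, b) + (2 * n / b) * DD (0,1) u (a, b))) b := by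
        refine HasDerivAt.congr_of_eventuallyEq ?_ hzero.symm
        exact hsum
      exact hz.unique (hasDerivAt_const b 0)
    -- assemble
    rw [F2, F3, F5, F4 b hb]
    push_cast
    push_cast at F6
    field_simp
    field_simp at F6
    linear_combination F6

lemma diffAtU {v : ℝ × ℝ → ℝ} (hv : ContDiffOn ℝ ∞ v U01) {s r : ℝ} (hr : 0 < r) :
    DifferentiableAt ℝ v (s, r) :=
  (hv.contDiffAt (isOpen_U01.mem_nhds (mem_U01 hr))).differentiableAt (by norm_cast)

lemma base_harm {h : ℝ × ℝ → ℝ} (hh : ContDiffOn ℝ ∞ h U01)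
    (hhharm : ∀ a b : ℝ, 0 < b →
      iteratedDeriv 2 (fun s => h (s, b)) a + iteratedDeriv 2 (fun s => h (a, s)) b = 0) :
    ∀ a b : ℝ, 0 < b →
      DD (1,0) (DD (1,0) h) (a, b) + DD (0,1) (DD (0,1) h) (a, b) = 0 := by
  intro a b hb
  have e1 : iteratedDeriv 2 (fun s => h (s, b)) a = DD (1,0) (DD (1,0) h) (a, b) := by
    rw [show (2:ℕ) = 1 + 1 from rfl, iteratedDeriv_succ, iteratedDeriv_succ, iteratedDeriv_zero]
    have hd : deriv (fun s => h (s, b)) = fun s => DD (1,0) h (s, b) := by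
      funext s
      exact (slice1 (diffAtU hh hb)).deriv
    rw [hd]
    exact (slice1 (diffAtU (DD_contDiffOn hh _) hb)).deriv
  have e2 : iteratedDeriv 2 (fun s => h (a, s)) b = DD (0,1) (DD (0,1) h) (a, b) := by
    rw [show (2:ℕ) = 1 + 1 from rfl, iteratedDeriv_succ, iteratedDeriv_succ, iteratedDeriv_zero]
    have hd : deriv (fun s => h (a, s)) =ᶠ[nhds b] fun s => DD (0,1) h (a, s) := by
      filter_upwards [isOpen_Ioi.mem_nhds hb] with s hs
      exact (slice2 (diffAtU hh hs)).deriv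
    rw [hd.deriv_eq]
    exact (slice2 (diffAtU (DD_contDiffOn hh _) hb)).deriv
  rw [← e1, ← e2]
  exact hhharm a b hb

lemma gs_dlow {h : ℝ × ℝ → ℝ} (hh : ContDiffOn ℝ ∞ h U01) (x₀ : ℝ) :
    ∀ n, ∀ r : ℝ, 0 < r → gs h n (x₀, r) = Dlow n (fun s => h (x₀, s)) r := by
  intro n
  induction n with
  | zero => intro r _; rfl
  | succ n ih =>
    intro r hr
    show DD (0,1) (gs h n) (x₀, r) / r = deriv (Dlow n fun s => h (x₀, s)) r / r
    congr 1
    have hev : (Dlow n fun s => h (x₀, s)) =ᶠ[nhds r] fun s => gs h n (x₀, s) := by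
      filter_upwards [isOpen_Ioi.mem_nhds hr] with s hs
      exact (ih s hs).symm
    rw [hev.deriv_eq]
    exact ((slice2 (diffAtU (gs_smooth hh n) hr)).deriv).symm

lemma DD_const_mul (c : ℝ) (v : ℝ × ℝ) {g : ℝ × ℝ → ℝ} {q : ℝ × ℝ}
    (hgd : DifferentiableAt ℝ g q) :
    DD v (fun q => c * g q) q = c * DD v g q := by
  simp [DD, fderiv_const_mul hgd c]

lemma lapProd_congr {m : ℕ} {F₁ F₂ : ℝ × EuclideanSpace ℝ (Fin m) → ℝ}
    (hs : Set.EqOn F₁ F₂ (Om m)) {p : ℝ × EuclideanSpace ℝ (Fin m)} (hp : p ∈ Om m) :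
    lapProd m F₁ p = lapProd m F₂ p := by
  have key : ∀ v : ℝ × EuclideanSpace ℝ (Fin m), dirDeriv2 F₁ v p = dirDeriv2 F₂ v p := by
    intro v
    have inner : Set.EqOn (fun q => fderiv ℝ F₁ q v) (fun q => fderiv ℝ F₂ q v) (Om m) := by
      intro q hq
      have : fderiv ℝ F₁ q = fderiv ℝ F₂ q :=
        Filter.EventuallyEq.fderiv_eq (hs.eventuallyEq_of_mem (isOpen_Om.mem_nhds hq))
      simp [this]
    have : fderiv ℝ (fun q => fderiv ℝ F₁ q v) p = fderiv ℝ (fun q => fderiv ℝ F₂ q v) p :=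
      Filter.EventuallyEq.fderiv_eq (inner.eventuallyEq_of_mem (isOpen_Om.mem_nhds hp))
    simp [dirDeriv2, this]
  simp [lapProd, key]

lemma diffAtU' {v : ℝ × ℝ → ℝ} (hv : ContDiffOn ℝ ∞ v U01) {q : ℝ × ℝ} (hq : q ∈ U01) :
    DifferentiableAt ℝ v q :=
  (hv.contDiffAt (isOpen_U01.mem_nhds hq)).differentiableAt (by norm_cast)

theorem iterated_laplacian_h_mul_P (m k n : ℕ) (hm : 1 ≤ m)
    (P : EuclideanSpace ℝ (Fin m) → ℝ) (hP : ContDiff ℝ (⊤ : ℕ∞) P)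
    (hPharm : ∀ x : EuclideanSpace ℝ (Fin m), x ≠ 0 → lapE m P x = 0)
    (hPhom : ∀ t : ℝ, 0 < t → ∀ x : EuclideanSpace ℝ (Fin m), P (t • x) = t ^ k * P x)
    (h : ℝ × ℝ → ℝ) (hh : ContDiffOn ℝ (⊤ : ℕ∞) h (Set.univ ×ˢ Set.Ioi (0 : ℝ)))
    (hhharm : ∀ a b : ℝ, 0 < b →
      iteratedDeriv 2 (fun s => h (s, b)) a + iteratedDeriv 2 (fun s => h (a, s)) b = 0)
    (x₀ : ℝ) (x : EuclideanSpace ℝ (Fin m)) (hx : x ≠ 0) :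
    (lapProd m)^[n] (fun p => h (p.1, ‖p.2‖) * P p.2) (x₀, x)
      = (∏ j ∈ Finset.range n, (2 * (k : ℝ) + m - (2 * (j : ℝ) + 1)))
          * Dlow n (fun s => h (x₀, s)) ‖x‖ * P x := by
  have hh' : ContDiffOn ℝ ∞ h U01 := hh.of_le (by simp)
  have hharm0 := base_harm hh' hhharm
  have main : ∀ N (a : ℝ) (y : EuclideanSpace ℝ (Fin m)) (hy : y ≠ 0),
      (lapProd m)^[N] (fun p => h (p.1, ‖p.2‖) * P p.2) (a, y)
        = (∏ j ∈ Finset.range N, (2 * (k : ℝ) + m - (2 * (j : ℝ) + 1)))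
            * gs h N (a, ‖y‖) * P y := by
    intro N
    induction N with
    | zero => intro a y hy; simp [gs]
    | succ N ih =>
      intro a y hy
      have hr : (0:ℝ) < ‖y‖ := norm_pos_iff.2 hy
      rw [Function.iterate_succ_apply']
      set C := ∏ j ∈ Finset.range N, (2 * (k : ℝ) + m - (2 * (j : ℝ) + 1)) with hC
      have heq : Set.EqOn ((lapProd m)^[N] (fun p => h (p.1, ‖p.2‖) * P p.2))
          (fun p => (C * gs h N (p.1, ‖p.2‖)) * P p.2) (Om m) := by
        rintro ⟨b, z⟩ hz
        exact ih b z hz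
      have hyOm : ((a, y) : ℝ × EuclideanSpace ℝ (Fin m)) ∈ Om m := hy
      rw [lapProd_congr heq hyOm]
      have hgsm := gs_smooth hh' N
      have hg' : ContDiffOn ℝ ∞ (fun q => C * gs h N q) U01 := contDiffOn_const.mul hgsm
      rw [step hP hPharm hPhom hg' a y hy]
      have c1 : ∀ v : ℝ × ℝ, Set.EqOn (DD v (fun q => C * gs h N q))
          (fun q => C * DD v (gs h N) q) U01 := by
        intro v q hq
        exact DD_const_mul C v (diffAtU' hgsm hq)
      have e11 : DD (1,0) (DD (1,0) (fun q => C * gs h N q)) (a, ‖y‖)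
          = C * DD (1,0) (DD (1,0) (gs h N)) (a, ‖y‖) := by
        rw [DD_congr (c1 (1,0)) (mem_U01 hr) (1,0),
          DD_const_mul C (1,0) (diffAtU (DD_contDiffOn hgsm (1,0)) hr)]
      have e22 : DD (0,1) (DD (0,1) (fun q => C * gs h N q)) (a, ‖y‖)
          = C * DD (0,1) (DD (0,1) (gs h N)) (a, ‖y‖) := by
        rw [DD_congr (c1 (0,1)) (mem_U01 hr) (0,1),
          DD_const_mul C (0,1) (diffAtU (DD_contDiffOn hgsm (0,1)) hr)]
      have e2 : DD (0,1) (fun q => C * gs h N q) (a, ‖y‖)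
          = C * DD (0,1) (gs h N) (a, ‖y‖) := DD_const_mul C (0,1) (diffAtU hgsm hr)
      rw [e11, e22, e2, Finset.prod_range_succ]
      have hgs1 : gs h (N+1) (a, ‖y‖) = DD (0,1) (gs h N) (a, ‖y‖) / ‖y‖ := rfl
      rw [hgs1]
      have harm := gs_harm hh' hharm0 N a ‖y‖ hr
      push_cast
      push_cast at harm
      linear_combination (C * P y) * harm
  rw [main n x₀ x hx, gs_dlow hh' x₀ n ‖x‖ (norm_pos_iff.2 hx)]
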